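/- arXiv:1902.09620 — 6 statements merged into one kernel-verified Lean document; each statement's English description precedes it below -/
import Mathlib

section
/- Let F be a field with char(F) ≠ 2 and G a group with an involution * extended F-linearly to the group algebra FG. If FG is normal (i.e., αα* = α*α for all α ∈ FG), then for all g, h ∈ G, either gh = hg or gh = g*h*. -/
/-!
Normality of `x + y` polarizes to `x y* + y x* = x* y + y* x` once `x` and `y` are themselves
normal. For `x = g` and `y = h*` this is the equation `gh + (gh)* = g*h* + hg` between sums of
two group elements with coefficient `1`; since `1 + 1 ≠ 0`, the term `gh` on the left must
reappear on the right.
-/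

/-- The F-linear extension of a group involution `st` to the group algebra. -/
noncomputable def invMap {F G : Type*} [Field F] [Group G] (st : G → G) :
    MonoidAlgebra F G → MonoidAlgebra F G :=
  fun α => MonoidAlgebra.ofCoeff (Finsupp.mapDomain st α.coeff)

theorem mul_add_mul_comm_of_forall_mul_self_comm {A : Type*} [Ring A] (s : A → A)
    (hadd : ∀ x y, s (x + y) = s x + s y) (hnormal : ∀ x, x * s x = s x * x) (x y : A) :
    x * s y + y * s x = s x * y + s y * x :=
  calc x * s y + y * s x = (x + y) * s (x + y) - x * s x - y * s y := by
        rw [hadd]; noncomm_ring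
    _ = s (x + y) * (x + y) - s x * x - s y * y := by rw [hnormal, hnormal x, hnormal y]
    _ = s x * y + s y * x := by rw [hadd]; noncomm_ring

theorem MonoidAlgebra.eq_or_eq_of_single_one_add_single_one_eq {R M : Type*} [Semiring R]
    (h2 : (2 : R) ≠ 0) {a b c d : M}
    (h : single a (1 : R) + single b 1 = single c 1 + single d 1) : a = c ∨ a = d := by
  have h1 : (1 : R) ≠ 0 := fun h1 => h2 (by rw [← one_add_one_eq_two, h1, add_zero])
  rcases (single_add_single_inj h1 h1).1 h with ⟨hac, -⟩ | ⟨-, had, -⟩ | ⟨h11, -⟩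
  · exact Or.inl hac
  · exact Or.inr had
  · exact absurd (one_add_one_eq_two.symm.trans h11) h2

theorem invMap_eq_mapDomain {F G : Type*} [Field F] [Group G] (st : G → G) :
    invMap (F := F) st = MonoidAlgebra.mapDomain st :=
  rfl

theorem stmt_0_general {F G : Type*} [Field F] [Group G] (h2 : (2 : F) ≠ 0)
    (st : G → G)
    (hinvol : ∀ g : G, st (st g) = g)
    (hnormal : ∀ α : MonoidAlgebra F G, α * invMap st α = invMap st α * α) :
    ∀ g h : G, g * h = h * g ∨ g * h = st g * st h := by
  intro g h
  have hpolar := mul_add_mul_comm_of_forall_mul_self_comm (invMap st)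
    (by simp [invMap_eq_mapDomain, MonoidAlgebra.mapDomain_add]) hnormal
    (MonoidAlgebra.single g (1 : F)) (MonoidAlgebra.single (st h) 1)
  simp only [invMap_eq_mapDomain, MonoidAlgebra.mapDomain_single, hinvol,
    MonoidAlgebra.single_mul_single, one_mul] at hpolar
  exact (MonoidAlgebra.eq_or_eq_of_single_one_add_single_one_eq h2 hpolar).symm

theorem stmt_0 {F G : Type*} [Field F] [Group G] (h2 : (2 : F) ≠ 0)
    (st : G → G) (hanti : ∀ g h : G, st (g * h) = st h * st g)
    (hinvol : ∀ g : G, st (st g) = g)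
    (hnormal : ∀ α : MonoidAlgebra F G, α * invMap st α = invMap st α * α) :
    ∀ g h : G, g * h = h * g ∨ g * h = st g * st h :=
  stmt_0_general h2 st hinvol hnormal
end

section
/- Let F be a field with char(F) ≠ 2 and G a non-abelian group with a unique non-identity commutator s (so G' = {1,s}, s central of order 2), equipped with the canonical involution g* = g if g is central and g* = sg otherwise. Then FG is normal: αα* = α*α for all α ∈ FG. -/
namespace MonoidAlgebra

variable {k G : Type*}

section Semiring

variable [Semiring k] [Mul G]

theorem mul_mapDomain_eq_sum (f : G → G) (x y : MonoidAlgebra k G) :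
    x * mapDomain f y =
      x.coeff.sum fun g a => y.coeff.sum fun h b => single (g * f h) (a * b) := by
  rw [mul_def]
  refine Finsupp.sum_congr fun g _ => Finsupp.sum_mapDomain_index (by simp) fun h b₁ b₂ => ?_
  rw [mul_add, single_add]

theorem mapDomain_mul_eq_sum (f : G → G) (x y : MonoidAlgebra k G) :
    mapDomain f x * y =
      x.coeff.sum fun g a => y.coeff.sum fun h b => single (f g * h) (a * b) := by
  rw [mul_def]
  refine Finsupp.sum_mapDomain_index (by simp [Finsupp.sum]) fun g a₁ a₂ => ?_
  simp only [add_mul, single_add]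
  exact Finsupp.sum_add

end Semiring

theorem mul_mapDomain_self_comm [CommSemiring k] [Mul G] (f : G → G) (r : G → G → Prop)
    (hr : ∀ g h, r g h → r h g) (h_rel : ∀ g h, r g h → g * f h = f g * h)
    (h_not_rel : ∀ g h, ¬ r g h → g * f h = f h * g) (x : MonoidAlgebra k G) :
    x * mapDomain f x = mapDomain f x * x := by
  classical
  rw [mul_mapDomain_eq_sum, mapDomain_mul_eq_sum]
  simp only [Finsupp.sum, ← Finset.sum_product']
  set S := x.coeff.support ×ˢ x.coeff.support
  let c := x.coeff
  rw [← Finset.sum_filter_add_sum_filter_not S (fun p => r p.1 p.2),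
    ← Finset.sum_filter_add_sum_filter_not S (fun p => r p.1 p.2)]
  congr 1
  · refine Finset.sum_congr rfl fun p hp => ?_
    rw [h_rel _ _ (Finset.mem_filter.mp hp).2]
  · calc ∑ p ∈ S with ¬ r p.1 p.2, single (p.1 * f p.2) (c p.1 * c p.2)
        = ∑ p ∈ S with ¬ r p.1 p.2, single (f p.2 * p.1) (c p.2 * c p.1) :=
          Finset.sum_congr rfl fun p hp => by
            rw [h_not_rel _ _ (Finset.mem_filter.mp hp).2, mul_comm (c p.1)]
      _ = ∑ p ∈ S with ¬ r p.1 p.2, single (f p.1 * p.2) (c p.1 * c p.2) :=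
          Finset.sum_equiv (Equiv.prodComm G G) (fun p => by
            simp only [Finset.mem_filter, S, Finset.mem_product, Equiv.prodComm_apply,
              Prod.fst_swap, Prod.snd_swap]
            exact ⟨fun ⟨⟨hg, hh⟩, hgh⟩ => ⟨⟨hh, hg⟩, fun hhg => hgh (hr _ _ hhg)⟩,
              fun ⟨⟨hh, hg⟩, hhg⟩ => ⟨⟨hg, hh⟩, fun hgh => hhg (hr _ _ hgh)⟩⟩)
            fun _ _ => rfl

end MonoidAlgebra

section CanonicalInvolution

variable {G : Type*} [Group G] {s : G} (st : G → G)

theorem mul_canonicalInvolution_eq_of_mem_center_iff (hsc : s ∈ Subgroup.center G)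
    (hst1 : ∀ g : G, g ∈ Subgroup.center G → st g = g)
    (hst2 : ∀ g : G, g ∉ Subgroup.center G → st g = s * g) {g h : G}
    (hgh : g ∈ Subgroup.center G ↔ h ∈ Subgroup.center G) : g * st h = st g * h := by
  by_cases hg : g ∈ Subgroup.center G
  · rw [hst1 g hg, hst1 h (hgh.mp hg)]
  · rw [hst2 g hg, hst2 h (mt hgh.mpr hg), ← mul_assoc,
      Subgroup.mem_center_iff.mp hsc g]

theorem mul_canonicalInvolution_comm_of_not_mem_center_iff
    (hst1 : ∀ g : G, g ∈ Subgroup.center G → st g = g) {g h : G}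
    (hgh : ¬ (g ∈ Subgroup.center G ↔ h ∈ Subgroup.center G)) : g * st h = st h * g := by
  by_cases hg : g ∈ Subgroup.center G
  · exact (Subgroup.mem_center_iff.mp hg _).symm
  · have hh : h ∈ Subgroup.center G := by tauto
    rw [hst1 h hh]
    exact Subgroup.mem_center_iff.mp hh g

end CanonicalInvolution

theorem stmt_6_general {F G : Type*} [Field F] [Group G]
    (s : G) (hsc : s ∈ Subgroup.center G)
    (st : G → G)
    (hst1 : ∀ g : G, g ∈ Subgroup.center G → st g = g)
    (hst2 : ∀ g : G, g ∉ Subgroup.center G → st g = s * g) :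
    ∀ α : MonoidAlgebra F G, α * invMap st α = invMap st α * α :=
  MonoidAlgebra.mul_mapDomain_self_comm st
    (fun g h => g ∈ Subgroup.center G ↔ h ∈ Subgroup.center G) (fun _ _ => Iff.symm)
    (fun _ _ => mul_canonicalInvolution_eq_of_mem_center_iff st hsc hst1 hst2)
    (fun _ _ => mul_canonicalInvolution_comm_of_not_mem_center_iff st hst1)

theorem stmt_6 {F G : Type*} [Field F] [Group G] (h2 : (2 : F) ≠ 0)
    (hna : ∃ g h : G, g * h ≠ h * g)
    (s : G) (hs1 : s ≠ 1) (hsc : s ∈ Subgroup.center G) (hs2 : s * s = 1)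
    (hcomm : ∀ g h : G, g⁻¹ * h⁻¹ * g * h = 1 ∨ g⁻¹ * h⁻¹ * g * h = s)
    (hLC : ∀ g h : G, g * h = h * g ↔
      (g ∈ Subgroup.center G ∨ h ∈ Subgroup.center G ∨ g * h ∈ Subgroup.center G))
    (st : G → G)
    (hst1 : ∀ g : G, g ∈ Subgroup.center G → st g = g)
    (hst2 : ∀ g : G, g ∉ Subgroup.center G → st g = s * g) :
    ∀ α : MonoidAlgebra F G, α * invMap st α = invMap st α * α :=
  stmt_6_general s hsc st hst1 hst2
end

section
/- Let G be an LC-group, i.e., a non-abelian group in which gh = hg if and only if at least one of g, h, gh is central. Then g² ∈ ζ(G) for all g ∈ G, and every commutator (g,h) = g⁻¹h⁻¹gh is central in G. -/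
theorem stmt_7 {G : Type*} [Group G]
    (hna : ∃ g h : G, g * h ≠ h * g)
    (hLC : ∀ g h : G, g * h = h * g ↔
      (g ∈ Subgroup.center G ∨ h ∈ Subgroup.center G ∨ g * h ∈ Subgroup.center G)) :
    (∀ g : G, g ^ 2 ∈ Subgroup.center G) ∧
      (∀ g h : G, g⁻¹ * h⁻¹ * g * h ∈ Subgroup.center G) := by
  have sq : ∀ g : G, g ^ 2 ∈ Subgroup.center G := by
    intro g
    rcases (hLC g g).mp rfl with h | h | h
    · rw [pow_two]; exact mul_mem h h
    · rw [pow_two]; exact mul_mem h h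
    · rwa [pow_two]
  refine ⟨sq, fun g h => ?_⟩
  have e : h * g ^ 2 = g ^ 2 * h := Subgroup.mem_center_iff.mp (sq g) h
  have key2 : (h * g) ^ 2 * (g⁻¹ * h⁻¹ * g * h) = g ^ 2 * h ^ 2 := by
    have h1 : (h * g) ^ 2 * (g⁻¹ * h⁻¹ * g * h) = h * g ^ 2 * h := by
      simp [pow_two, mul_assoc]
    rw [h1, e, mul_assoc, ← pow_two]
  have key : g⁻¹ * h⁻¹ * g * h = ((h * g) ^ 2)⁻¹ * (g ^ 2 * h ^ 2) := by
    rw [← key2, inv_mul_cancel_left]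
  rw [key]
  exact mul_mem (inv_mem (sq _)) (mul_mem (sq g) (sq h))
end

section
/- Let G be a non-abelian group with unique non-identity commutator s, with the canonical involution g* = g for central g and g* = sg otherwise. Then the map g ↦ g* is a group involution: (gh)* = h*g* and (g*)* = g for all g, h ∈ G. -/
theorem stmt_8 {G : Type*} [Group G]
    (hna : ∃ g h : G, g * h ≠ h * g)
    (s : G) (hs1 : s ≠ 1) (hsc : s ∈ Subgroup.center G) (hs2 : s * s = 1)
    (hcomm : ∀ g h : G, g⁻¹ * h⁻¹ * g * h = 1 ∨ g⁻¹ * h⁻¹ * g * h = s)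
    (hLC : ∀ g h : G, g * h = h * g ↔
      (g ∈ Subgroup.center G ∨ h ∈ Subgroup.center G ∨ g * h ∈ Subgroup.center G))
    (st : G → G)
    (hst1 : ∀ g : G, g ∈ Subgroup.center G → st g = g)
    (hst2 : ∀ g : G, g ∉ Subgroup.center G → st g = s * g) :
    (∀ g h : G, st (g * h) = st h * st g) ∧ (∀ g : G, st (st g) = g) := by
  have hscomm : ∀ x : G, x * s = s * x := fun x => Subgroup.mem_center_iff.mp hsc x
  constructor
  · intro g h
    by_cases hg : g ∈ Subgroup.center G <;> by_cases hh : h ∈ Subgroup.center G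
    · have hgh : g * h ∈ Subgroup.center G := mul_mem hg hh
      rw [hst1 _ hgh, hst1 _ hg, hst1 _ hh]
      exact (Subgroup.mem_center_iff.mp hg h).symm
    · have hgh : g * h ∉ Subgroup.center G := by
        intro hm
        exact hh (by simpa using mul_mem (inv_mem hg) hm)
      rw [hst2 _ hgh, hst2 _ hh, hst1 _ hg]
      rw [show g*h = h*g from (Subgroup.mem_center_iff.mp hg h).symm, mul_assoc]
    · have hgh : g * h ∉ Subgroup.center G := by
        intro hm
        exact hg (by simpa [mul_assoc] using mul_mem hm (inv_mem hh))
      rw [hst2 _ hgh, hst1 _ hh, hst2 _ hg]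
      rw [← Subgroup.mem_center_iff.mp hh (s*g), mul_assoc]
    · by_cases hgh : g * h ∈ Subgroup.center G
      · rw [hst1 _ hgh, hst2 _ hh, hst2 _ hg]
        have h1 : g * h = h * g := (hLC g h).mpr (Or.inr (Or.inr hgh))
        rw [h1, mul_assoc, ← mul_assoc h s, hscomm h, ← mul_assoc, ← mul_assoc, hs2, one_mul]
      · rw [hst2 _ hgh, hst2 _ hh, hst2 _ hg]
        rcases hcomm g h with hc | hc
        · exfalso
          have heq : g * h = h * g := by
            have h2 : h * g * (g⁻¹ * h⁻¹ * g * h) = h * g * 1 := by rw [hc]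
            group at h2
            simpa using h2
          rcases (hLC g h).mp heq with h' | h' | h'
          · exact hg h'
          · exact hh h'
          · exact hgh h'
        · have key : g * h = s * (h * g) := by
            have h2 : h * g * (g⁻¹ * h⁻¹ * g * h) = h * g * s := by rw [hc]
            group at h2
            rw [h2, hscomm (h*g)]
          rw [key, mul_assoc, ← mul_assoc h s, hscomm h, ← mul_assoc, ← mul_assoc, ← mul_assoc, hs2, one_mul, ← mul_assoc s s, hs2, one_mul]
  · intro g
    by_cases hg : g ∈ Subgroup.center G
    · rw [hst1 _ hg, hst1 _ hg]
    · rw [hst2 _ hg]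
      have hsg : s * g ∉ Subgroup.center G := by
        intro hm
        exact hg (by simpa [← mul_assoc, hs2] using mul_mem (inv_mem hsc) hm)
      rw [hst2 _ hsg, ← mul_assoc, hs2, one_mul]
end

section
/- Let F be a field with char(F) ≠ 2, G a group, σ : G → {±1} a group homomorphism, and * an involution on G. The map ⊛ on FG defined by (Σ α_g g)⊛ = Σ α_g σ(g) g* is an algebra involution on FG if and only if gg* ∈ ker(σ) for all g ∈ G. -/
/-!
The map `⊛` is additive and sends `g` to `σ(g) g*`; since `*` reverses products and `σ` is
multiplicative, `⊛` always reverses products of basis elements, hence of all elements. Applying `⊛`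
twice multiplies the basis element `g` by `σ(g*) σ(g) = σ(g g*)`, so `⊛` is involutive exactly
when `σ(g g*) = 1` for every `g`.
-/

/-- The oriented involution on the group algebra: `(Σ α_g g)⊛ = Σ α_g σ(g) g*`. -/
noncomputable def oinvMap {F G : Type*} [Field F] [Group G] (st : G → G) (σ : G → F) :
    MonoidAlgebra F G → MonoidAlgebra F G :=
  fun α => Finsupp.sum α.coeff fun g c => MonoidAlgebra.single (st g) (σ g * c)

section

open MonoidAlgebra

variable {F G : Type*} [Field F] [Group G] (st : G → G) (σ : G → F)

theorem oinvMap_single (g : G) (c : F) :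
    oinvMap st σ (single g c) = single (st g) (σ g * c) := by
  rw [oinvMap, coeff_single]
  exact Finsupp.sum_single_index (by simp)

theorem oinvMap_zero : oinvMap st σ 0 = 0 := by
  simp [oinvMap]

theorem oinvMap_add (α β : MonoidAlgebra F G) :
    oinvMap st σ (α + β) = oinvMap st σ α + oinvMap st σ β := by
  rw [oinvMap, coeff_add]
  exact Finsupp.sum_add_index' (by simp) fun _ _ _ => by rw [mul_add, single_add]

variable {st σ}

theorem oinvMap_mul (hanti : ∀ g h : G, st (g * h) = st h * st g)
    (hhom : ∀ g h : G, σ (g * h) = σ g * σ h) (α β : MonoidAlgebra F G) :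
    oinvMap st σ (α * β) = oinvMap st σ β * oinvMap st σ α := by
  induction α using MonoidAlgebra.induction_linear with
  | zero => simp [oinvMap_zero]
  | add a b ha hb => rw [add_mul, oinvMap_add, ha, hb, oinvMap_add, mul_add]
  | single g c =>
    induction β using MonoidAlgebra.induction_linear with
    | zero => simp [oinvMap_zero]
    | add a b ha hb => rw [mul_add, oinvMap_add, ha, hb, oinvMap_add, add_mul]
    | single h d =>
      rw [single_mul_single, oinvMap_single, oinvMap_single, oinvMap_single, single_mul_single,
        hanti, hhom]
      ring_nf

theorem oinvMap_oinvMap_single (hinvol : ∀ g : G, st (st g) = g)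
    (hhom : ∀ g h : G, σ (g * h) = σ g * σ h) (g : G) (c : F) :
    oinvMap st σ (oinvMap st σ (single g c)) = single g (σ (g * st g) * c) := by
  rw [oinvMap_single, oinvMap_single, hinvol, hhom, ← mul_assoc, mul_comm (σ (st g))]

theorem oinvMap_involutive_iff (hinvol : ∀ g : G, st (st g) = g)
    (hhom : ∀ g h : G, σ (g * h) = σ g * σ h) :
    Function.Involutive (oinvMap st σ) ↔ ∀ g : G, σ (g * st g) = 1 := by
  refine ⟨fun hinv g => ?_, fun hker α => ?_⟩
  · have h := hinv (single g 1)
    rw [oinvMap_oinvMap_single hinvol hhom, mul_one] at h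
    exact single_right_injective h
  · induction α using MonoidAlgebra.induction_linear with
    | zero => simp [oinvMap_zero]
    | add a b ha hb => rw [oinvMap_add, oinvMap_add, ha, hb]
    | single g c => rw [oinvMap_oinvMap_single hinvol hhom, hker, one_mul]

end

theorem stmt_9_general {F G : Type*} [Field F] [Group G]
    (st : G → G) (hanti : ∀ g h : G, st (g * h) = st h * st g)
    (hinvol : ∀ g : G, st (st g) = g)
    (σ : G → F) (hhom : ∀ g h : G, σ (g * h) = σ g * σ h) :
    ((∀ α β : MonoidAlgebra F G, oinvMap st σ (α * β) = oinvMap st σ β * oinvMap st σ α) ∧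
        (∀ α : MonoidAlgebra F G, oinvMap st σ (oinvMap st σ α) = α)) ↔
      ∀ g : G, σ (g * st g) = 1 := by
  rw [← oinvMap_involutive_iff hinvol hhom]
  exact and_iff_right (oinvMap_mul hanti hhom)

theorem stmt_9 {F G : Type*} [Field F] [Group G] (h2 : (2 : F) ≠ 0)
    (st : G → G) (hanti : ∀ g h : G, st (g * h) = st h * st g)
    (hinvol : ∀ g : G, st (st g) = g)
    (σ : G → F) (hhom : ∀ g h : G, σ (g * h) = σ g * σ h)
    (hval : ∀ g : G, σ g = 1 ∨ σ g = -1) :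
    ((∀ α β : MonoidAlgebra F G, oinvMap st σ (α * β) = oinvMap st σ β * oinvMap st σ α) ∧
        (∀ α : MonoidAlgebra F G, oinvMap st σ (oinvMap st σ α) = α)) ↔
      ∀ g : G, σ (g * st g) = 1 :=
  stmt_9_general st hanti hinvol σ hhom
end

section
/- Let G be a non-abelian group with an index-2 abelian subgroup N such that every x ∈ G \ N satisfies x² ∈ N and conjugation by any a ∈ G \ N gives the same automorphism of N. Define * : G → G by x* = x for x ∉ N and n* = a⁻¹na for n ∈ N (a ∈ G \ N fixed). Then * is a group involution on G: (gh)* = h*g* and (g*)* = g for all g, h ∈ G. -/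
theorem stmt_14 {G : Type*} [Group G]
    (hna : ∃ g h : G, g * h ≠ h * g)
    (N : Subgroup G) (hidx : N.index = 2)
    (hab : ∀ m n : G, m ∈ N → n ∈ N → m * n = n * m)
    (hsq : ∀ x : G, x ∉ N → x ^ 2 ∈ N)
    (hconj : ∀ a b n : G, a ∉ N → b ∉ N → n ∈ N → a⁻¹ * n * a = b⁻¹ * n * b)
    (a : G) (ha : a ∉ N)
    (st : G → G)
    (hstN : ∀ n : G, n ∈ N → st n = a⁻¹ * n * a)
    (hstX : ∀ x : G, x ∉ N → st x = x) :
    (∀ g h : G, st (g * h) = st h * st g) ∧ (∀ g : G, st (st g) = g) := by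
  have hmul : ∀ x y : G, x * y ∈ N ↔ (x ∈ N ↔ y ∈ N) := fun x y =>
    Subgroup.mul_mem_iff_of_index_two hidx
  have hinv : ∀ x : G, x⁻¹ ∈ N ↔ x ∈ N := fun x => N.inv_mem_iff
  -- normality of N
  have hnorm : ∀ b n : G, n ∈ N → b⁻¹ * n * b ∈ N := by
    intro b n hn
    by_cases hb : b ∈ N
    · exact N.mul_mem (N.mul_mem ((hinv b).2 hb) hn) hb
    · rw [mul_assoc, hmul, hinv, hmul]
      tauto
  constructor
  · intro g h
    by_cases hg : g ∈ N <;> by_cases hh : h ∈ N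
    · have hgh : g * h ∈ N := N.mul_mem hg hh
      rw [hstN _ hgh, hstN _ hg, hstN _ hh, hab g h hg hh]
      group
    · have hgh : g * h ∉ N := by rw [hmul]; tauto
      rw [hstX _ hgh, hstX _ hh, hstN _ hg, hconj a h g ha hh hg]
      group
    · have hgh : g * h ∉ N := by rw [hmul]; tauto
      rw [hstX _ hgh, hstX _ hg, hstN _ hh, hconj a g h ha hg hh]
      have hg2 : g ^ 2 ∈ N := hsq g hg
      have : h * g ^ 2 = g ^ 2 * h := hab h (g ^ 2) hh hg2
      have key : g * h = g⁻¹ * h * g * g := by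
        have hc : h * (g * g) = (g * g) * h := by
          have := hab h (g ^ 2) hh hg2; rwa [pow_two] at this
        rw [mul_assoc g⁻¹, mul_assoc g⁻¹, mul_assoc h, hc]
        group
      rw [key]
    · have hgh : g * h ∈ N := by rw [hmul]; tauto
      rw [hstN _ hgh, hstX _ hg, hstX _ hh]
      have h2 : h ^ 2 ∈ N := hsq h hh
      -- h² is fixed by conjugation by a (since conj by h fixes it)
      have hfix : a⁻¹ * h ^ 2 * a = h ^ 2 := by
        rw [hconj a h (h ^ 2) ha hh h2]; group
      -- g commutes with h²: g⁻¹ h² g = a⁻¹ h² a = h²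
      have hgcomm : g⁻¹ * h ^ 2 * g = h ^ 2 := by
        rw [← hconj a g (h ^ 2) ha hg h2]; exact hfix
      rw [hconj a h (g * h) ha hh hgh]
      have : h⁻¹ * (g * h) * h = h⁻¹ * (g * h ^ 2) := by rw [pow_two]; group
      rw [this]
      have : g * h ^ 2 = h ^ 2 * g := by
        have := hgcomm
        calc g * h ^ 2 = g * (g⁻¹ * h ^ 2 * g) := by rw [hgcomm]
        _ = h ^ 2 * g := by group
      rw [this]
      have : h⁻¹ * (h ^ 2 * g) = h * g := by group
      rw [this]
  · intro g
    by_cases hg : g ∈ N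
    · have h1 : st g = a⁻¹ * g * a := hstN _ hg
      have h2 : a⁻¹ * g * a ∈ N := hnorm a g hg
      rw [h1, hstN _ h2]
      have ha2 : a ^ 2 ∈ N := hsq a ha
      have : a⁻¹ * (a⁻¹ * g * a) * a = (a * a)⁻¹ * g * (a * a) := by group
      rw [this]
      have hcomm : g * (a * a) = (a * a) * g := by
        have := hab g (a ^ 2) hg ha2; rwa [pow_two] at this
      rw [show (a * a)⁻¹ * g * (a * a) = (a * a)⁻¹ * (g * (a * a)) by group, hcomm]
      group
    · rw [hstX _ hg, hstX _ hg]
end
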